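/- Let γ(u,t) be a one-parameter family of smooth pseudo null curves in E⁴₁ with speed v = ‖∂γ/∂u‖, pseudo null Frenet frame {T, N, B₁, B₂} with curvatures k₁ = 1, k₂, k₃, and flow ∂γ/∂t = α₁T + α₂N + α₃B₁ + α₄B₂. Then the flow is inextensible (i.e. ∂v/∂t = 0 for all u, t) if and only if ∂α₁/∂u = α₄ v. -/

import Mathlib

/-!
Formalization of inextensible flows of partially null / pseudo null curves in
Minkowski space-time `E⁴₁` (ℝ⁴ with signature (-,+,+,+)).
-/

noncomputable section

/-- The Minkowski bilinear form on `ℝ⁴` with signature `(-,+,+,+)`. -/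
def mink (v w : Fin 4 → ℝ) : ℝ :=
  -(v 0 * w 0) + v 1 * w 1 + v 2 * w 2 + v 3 * w 3

/-- The Minkowski norm `‖v‖ = √|⟨v,v⟩|`. -/
def mnorm (v : Fin 4 → ℝ) : ℝ := Real.sqrt |mink v v|

/-!
Since `∂γ/∂u = v T` with `⟨T, T⟩ = 1`, the speed is `v = ⟨T, ∂γ/∂u⟩`, and `⟨T, ∂T/∂t⟩ = 0` gives
`∂v/∂t = ⟨T, ∂²γ/∂t∂u⟩ = ⟨T, ∂/∂u (∂γ/∂t)⟩`. Differentiating `⟨T, ∂γ/∂t⟩ = α₁` in `u`, with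
`∂T/∂u = v N` and `⟨N, ∂γ/∂t⟩ = α₄`, turns this into `∂v/∂t = ∂α₁/∂u - α₄ v`.
-/

section MixedPartials

variable {E : Type*} [NormedAddCommGroup E] [NormedSpace ℝ E]

theorem HasFDerivAt.hasDerivAt_fst {f : ℝ × ℝ → E} {f' : ℝ × ℝ →L[ℝ] E} {u t : ℝ}
    (h : HasFDerivAt f f' (u, t)) : HasDerivAt (fun y => f (y, t)) (f' (1, 0)) u :=
  h.comp_hasDerivAt u ((hasDerivAt_id u).prodMk (hasDerivAt_const u t))

theorem HasFDerivAt.hasDerivAt_snd {f : ℝ × ℝ → E} {f' : ℝ × ℝ →L[ℝ] E} {u t : ℝ}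
    (h : HasFDerivAt f f' (u, t)) : HasDerivAt (fun x => f (u, x)) (f' (0, 1)) t :=
  h.comp_hasDerivAt t ((hasDerivAt_const t u).prodMk (hasDerivAt_id t))

/-- `∂/∂u (∂F/∂t)` at `(u, t)`. -/
def mixedPartial (F : ℝ → ℝ → E) (u t : ℝ) : E :=
  fderiv ℝ (fderiv ℝ fun p : ℝ × ℝ => F p.1 p.2) (u, t) (1, 0) (0, 1)

variable {F : ℝ → ℝ → E}

theorem hasDerivAt_deriv_snd (hF : ContDiff ℝ 2 fun p : ℝ × ℝ => F p.1 p.2) (u t : ℝ) :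
    HasDerivAt (fun y => deriv (fun x => F y x) t) (mixedPartial F u t) u := by
  set f : ℝ × ℝ → E := fun p => F p.1 p.2
  have hf : Differentiable ℝ f := hF.differentiable two_ne_zero
  have hf' : DifferentiableAt ℝ (fderiv ℝ f) (u, t) :=
    (hF.fderiv_right one_add_one_eq_two.le).differentiable one_ne_zero (u, t)
  have hpartial : (fun y => deriv (fun x => F y x) t) = fun y => fderiv ℝ f (y, t) (0, 1) :=
    funext fun y => (hf (y, t)).hasFDerivAt.hasDerivAt_snd.deriv
  rw [hpartial, mixedPartial]
  simpa using hf'.hasFDerivAt.hasDerivAt_fst.clm_apply (hasDerivAt_const u ((0, 1) : ℝ × ℝ))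

theorem hasDerivAt_deriv_fst (hF : ContDiff ℝ 2 fun p : ℝ × ℝ => F p.1 p.2) (u t : ℝ) :
    HasDerivAt (fun x => deriv (fun y => F y x) u) (mixedPartial F u t) t := by
  set f : ℝ × ℝ → E := fun p => F p.1 p.2
  have hf : Differentiable ℝ f := hF.differentiable two_ne_zero
  have hf' : DifferentiableAt ℝ (fderiv ℝ f) (u, t) :=
    (hF.fderiv_right one_add_one_eq_two.le).differentiable one_ne_zero (u, t)
  have hpartial : (fun x => deriv (fun y => F y x) u) = fun x => fderiv ℝ f (u, x) (1, 0) :=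
    funext fun x => (hf (u, x)).hasFDerivAt.hasDerivAt_fst.deriv
  have hsymm := (hF.contDiffAt (x := (u, t))).isSymmSndFDerivAt (by simp)
  rw [hpartial, mixedPartial, hsymm.eq]
  simpa using hf'.hasFDerivAt.hasDerivAt_snd.clm_apply (hasDerivAt_const t ((1, 0) : ℝ × ℝ))

end MixedPartials

section Minkowski

theorem mink_comm (x y : Fin 4 → ℝ) : mink x y = mink y x := by
  simp only [mink]; ring

theorem mink_add_right (x y z : Fin 4 → ℝ) : mink x (y + z) = mink x y + mink x z := by
  simp only [mink, Pi.add_apply]; ring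

theorem mink_smul_right (a : ℝ) (x y : Fin 4 → ℝ) : mink x (a • y) = a * mink x y := by
  simp only [mink, Pi.smul_apply, smul_eq_mul]; ring

theorem mink_smul_left (a : ℝ) (x y : Fin 4 → ℝ) : mink (a • x) y = a * mink x y := by
  rw [mink_comm, mink_smul_right, mink_comm]

variable {f g : ℝ → Fin 4 → ℝ} {f' g' : Fin 4 → ℝ} {x : ℝ}

theorem HasDerivAt.mink (hf : HasDerivAt f f' x) (hg : HasDerivAt g g' x) :
    HasDerivAt (fun y => mink (f y) (g y)) (mink f' (g x) + mink (f x) g') x := by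
  have hfi := hasDerivAt_pi.1 hf
  have hgi := hasDerivAt_pi.1 hg
  refine (((((hfi 0).mul (hgi 0)).neg.add ((hfi 1).mul (hgi 1))).add
    ((hfi 2).mul (hgi 2))).add ((hfi 3).mul (hgi 3))).congr_deriv ?_
  simp only [_root_.mink]
  ring

theorem mink_deriv_eq_zero_of_mink_self_eq {c : ℝ} (hf : HasDerivAt f f' x)
    (hc : ∀ y, mink (f y) (f y) = c) : mink f' (f x) = 0 := by
  have h := hf.mink hf
  simp only [hc] at h
  have h0 := (hasDerivAt_const x c).unique h
  rw [mink_comm (f x)] at h0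
  linarith

/-- Since `f` has constant square, `f' ⊥ f`, so only `g'` contributes to the derivative of
`c = ⟨f, g⟩`. -/
theorem hasDerivAt_of_eq_smul_unit {c : ℝ → ℝ} (hg : HasDerivAt g g' x) (hf : HasDerivAt f f' x)
    (heq : ∀ y, g y = c y • f y) (hunit : ∀ y, mink (f y) (f y) = 1) :
    HasDerivAt c (mink (f x) g') x := by
  have hc : c = fun y => mink (f y) (g y) := by
    funext y
    rw [heq, mink_smul_right, hunit, mul_one]
  rw [hc]
  convert hf.mink hg using 1
  rw [heq, mink_smul_right, mink_deriv_eq_zero_of_mink_self_eq hf hunit, mul_zero, zero_add]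

theorem mink_deriv_right_eq_of_mink_eq {a : ℝ → ℝ} {n : Fin 4 → ℝ} {c : ℝ} (hf : HasDerivAt f (c • n) x)
    (hg : HasDerivAt g g' x) (ha : ∀ y, mink (f y) (g y) = a y) :
    mink (f x) g' = deriv a x - c * mink n (g x) := by
  have h := hf.mink hg
  simp only [ha] at h
  rw [h.deriv, mink_smul_left]
  ring

end Minkowski

theorem inextensible_iff_pseudo_null_general
    (γ T N B₁ B₂ : ℝ → ℝ → (Fin 4 → ℝ))
    (v k₁ α₁ α₂ α₃ α₄ : ℝ → ℝ → ℝ)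
    (hγsmooth : ContDiff ℝ (⊤ : ℕ∞) (fun p : ℝ × ℝ => γ p.1 p.2))
    (hTsmooth : ContDiff ℝ (⊤ : ℕ∞) (fun p : ℝ × ℝ => T p.1 p.2))
    (hTT : ∀ u t : ℝ, mink (T u t) (T u t) = 1)
    (hNN : ∀ u t : ℝ, mink (N u t) (N u t) = 0)
    (hNB₂ : ∀ u t : ℝ, mink (N u t) (B₂ u t) = 1)
    (hTN : ∀ u t : ℝ, mink (T u t) (N u t) = 0)
    (hTB₁ : ∀ u t : ℝ, mink (T u t) (B₁ u t) = 0)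
    (hTB₂ : ∀ u t : ℝ, mink (T u t) (B₂ u t) = 0)
    (hNB₁ : ∀ u t : ℝ, mink (N u t) (B₁ u t) = 0)
    -- speed, tangent and pseudo null Frenet equations (∂/∂s = (1/v)∂/∂u, k₁ = 1)
    (hk₁ : ∀ u t : ℝ, k₁ u t = 1)
    (hT : ∀ u t : ℝ, deriv (fun x => γ x t) u = v u t • T u t)
    (hfr₁ : ∀ u t : ℝ, deriv (fun x => T x t) u = (v u t * k₁ u t) • N u t)
    (hflow : ∀ u t : ℝ, deriv (fun x => γ u x) t =
      α₁ u t • T u t + α₂ u t • N u t + α₃ u t • B₁ u t + α₄ u t • B₂ u t) :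
    (∀ u t : ℝ, deriv (fun x => v u x) t = 0) ↔
      (∀ u t : ℝ, deriv (fun x => α₁ x t) u = α₄ u t * v u t) := by
  have hγ : ContDiff ℝ 2 fun p : ℝ × ℝ => γ p.1 p.2 := hγsmooth.of_le (by norm_cast)
  have hTdiff : Differentiable ℝ fun p : ℝ × ℝ => T p.1 p.2 := hTsmooth.differentiable (by simp)
  have key : ∀ u t, deriv (fun x => v u x) t = deriv (fun x => α₁ x t) u - α₄ u t * v u t := by
    intro u t
    have hTu : HasDerivAt (fun y => T y t) ((v u t * k₁ u t) • N u t) u := by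
      rw [← hfr₁]; exact (hTdiff (u, t)).hasFDerivAt.hasDerivAt_fst.differentiableAt.hasDerivAt
    have hTt : HasDerivAt (fun x => T u x) (deriv (fun x => T u x) t) t :=
      (hTdiff (u, t)).hasFDerivAt.hasDerivAt_snd.differentiableAt.hasDerivAt
    have hα₁ : ∀ y, mink (T y t) (deriv (fun x => γ y x) t) = α₁ y t := fun y => by
      simp only [hflow, mink_add_right, mink_smul_right, hTT, hTN, hTB₁, hTB₂]; ring
    have hα₄ : mink (N u t) (deriv (fun x => γ u x) t) = α₄ u t := by
      simp only [hflow, mink_add_right, mink_smul_right, mink_comm (N u t) (T u t), hTN, hNN,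
        hNB₁, hNB₂]; ring
    have hspeed := hasDerivAt_of_eq_smul_unit (hasDerivAt_deriv_fst hγ u t) hTt
      (fun x => hT u x) (hTT u)
    rw [hspeed.deriv, mink_deriv_right_eq_of_mink_eq hTu (hasDerivAt_deriv_snd hγ u t) hα₁, hα₄, hk₁]
    ring
  simp only [key, sub_eq_zero]

theorem inextensible_iff_pseudo_null
    (γ T N B₁ B₂ : ℝ → ℝ → (Fin 4 → ℝ))
    (v k₁ k₂ k₃ α₁ α₂ α₃ α₄ : ℝ → ℝ → ℝ)
    (hγsmooth : ContDiff ℝ (⊤ : ℕ∞) (fun p : ℝ × ℝ => γ p.1 p.2))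
    (hTsmooth : ContDiff ℝ (⊤ : ℕ∞) (fun p : ℝ × ℝ => T p.1 p.2))
    (hNsmooth : ContDiff ℝ (⊤ : ℕ∞) (fun p : ℝ × ℝ => N p.1 p.2))
    (hB₁smooth : ContDiff ℝ (⊤ : ℕ∞) (fun p : ℝ × ℝ => B₁ p.1 p.2))
    (hB₂smooth : ContDiff ℝ (⊤ : ℕ∞) (fun p : ℝ × ℝ => B₂ p.1 p.2))
    (hk₂smooth : ContDiff ℝ (⊤ : ℕ∞) (fun p : ℝ × ℝ => k₂ p.1 p.2))
    (hk₃smooth : ContDiff ℝ (⊤ : ℕ∞) (fun p : ℝ × ℝ => k₃ p.1 p.2))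
    (hα₁smooth : ContDiff ℝ (⊤ : ℕ∞) (fun p : ℝ × ℝ => α₁ p.1 p.2))
    (hα₂smooth : ContDiff ℝ (⊤ : ℕ∞) (fun p : ℝ × ℝ => α₂ p.1 p.2))
    (hα₃smooth : ContDiff ℝ (⊤ : ℕ∞) (fun p : ℝ × ℝ => α₃ p.1 p.2))
    (hα₄smooth : ContDiff ℝ (⊤ : ℕ∞) (fun p : ℝ × ℝ => α₄ p.1 p.2))
    (hTT : ∀ u t : ℝ, mink (T u t) (T u t) = 1)
    (hB₁B₁ : ∀ u t : ℝ, mink (B₁ u t) (B₁ u t) = 1)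
    (hNN : ∀ u t : ℝ, mink (N u t) (N u t) = 0)
    (hB₂B₂ : ∀ u t : ℝ, mink (B₂ u t) (B₂ u t) = 0)
    (hNB₂ : ∀ u t : ℝ, mink (N u t) (B₂ u t) = 1)
    (hTN : ∀ u t : ℝ, mink (T u t) (N u t) = 0)
    (hTB₁ : ∀ u t : ℝ, mink (T u t) (B₁ u t) = 0)
    (hTB₂ : ∀ u t : ℝ, mink (T u t) (B₂ u t) = 0)
    (hNB₁ : ∀ u t : ℝ, mink (N u t) (B₁ u t) = 0)
    (hB₁B₂ : ∀ u t : ℝ, mink (B₁ u t) (B₂ u t) = 0)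
    -- speed, tangent and pseudo null Frenet equations (∂/∂s = (1/v)∂/∂u, k₁ = 1)
    (hk₁ : ∀ u t : ℝ, k₁ u t = 1)
    (hv : ∀ u t : ℝ, v u t = mnorm (deriv (fun x => γ x t) u))
    (hvpos : ∀ u t : ℝ, 0 < v u t)
    (hT : ∀ u t : ℝ, deriv (fun x => γ x t) u = v u t • T u t)
    (hfr₁ : ∀ u t : ℝ, deriv (fun x => T x t) u = (v u t * k₁ u t) • N u t)
    (hfr₂ : ∀ u t : ℝ, deriv (fun x => N x t) u = (v u t * k₂ u t) • B₁ u t)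
    (hfr₃ : ∀ u t : ℝ, deriv (fun x => B₁ x t) u =
      (v u t * k₃ u t) • N u t - (v u t * k₂ u t) • B₂ u t)
    (hfr₄ : ∀ u t : ℝ, deriv (fun x => B₂ x t) u =
      (v u t * -(k₁ u t)) • T u t - (v u t * k₃ u t) • B₁ u t)
    (hflow : ∀ u t : ℝ, deriv (fun x => γ u x) t =
      α₁ u t • T u t + α₂ u t • N u t + α₃ u t • B₁ u t + α₄ u t • B₂ u t) :
    (∀ u t : ℝ, deriv (fun x => v u x) t = 0) ↔
      (∀ u t : ℝ, deriv (fun x => α₁ x t) u = α₄ u t * v u t) :=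
  inextensible_iff_pseudo_null_general γ T N B₁ B₂ v k₁ α₁ α₂ α₃ α₄ hγsmooth hTsmooth hTT hNN hNB₂
    hTN hTB₁ hTB₂ hNB₁ hk₁ hT hfr₁ hflow
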